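/- arXiv:1511.09254 — 5 statements merged into one kernel-verified Lean document; each statement's English description precedes it below -/
import Mathlib

section
/- For every k ≥ 1, with f_{5k} = (yᵏzᵏ - x^{2k})² yᵏ - x^{5k} ∈ ℂ[x,y,z], the triple (a,b,c) = (0, 2y^{k+1}z^{k-1}, x^{2k} - 3yᵏzᵏ) is a syzygy of the partial derivatives of f_{5k}, i.e. a·∂f_{5k}/∂x + b·∂f_{5k}/∂y + c·∂f_{5k}/∂z = 0. -/
open MvPolynomial

noncomputable abbrev x : MvPolynomial (Fin 3) ℂ := X 0
noncomputable abbrev y : MvPolynomial (Fin 3) ℂ := X 1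
noncomputable abbrev z : MvPolynomial (Fin 3) ℂ := X 2

theorem stmt_2 (k : ℕ) (hk : 1 ≤ k) :
    let f : MvPolynomial (Fin 3) ℂ := (y ^ k * z ^ k - x ^ (2 * k)) ^ 2 * y ^ k - x ^ (5 * k)
    0 * pderiv 0 f + (2 * y ^ (k + 1) * z ^ (k - 1)) * pderiv 1 f
      + (x ^ (2 * k) - 3 * y ^ k * z ^ k) * pderiv 2 f = 0 := by
  obtain ⟨m, rfl⟩ := Nat.exists_eq_add_of_le hk
  intro f
  have h2 : 2 * (1 + m) = 2 * m + 2 := by ring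
  have h5 : 5 * (1 + m) = 5 * m + 5 := by ring
  have h1 : 1 + m = m + 1 := by ring
  simp only [f, h1, h2, h5, Nat.add_sub_cancel]
  simp only [map_sub, map_mul, pderiv_pow, pderiv_mul, pderiv_X, Nat.add_sub_cancel,
    map_sub, map_mul]
  simp only [Pi.single_eq_same, Pi.single_eq_of_ne (by decide : (1:Fin 3) ≠ 0),
    Pi.single_eq_of_ne (by decide : (2:Fin 3) ≠ 0), Pi.single_eq_of_ne (by decide : (0:Fin 3) ≠ 1),
    Pi.single_eq_of_ne (by decide : (2:Fin 3) ≠ 1), Pi.single_eq_of_ne (by decide : (0:Fin 3) ≠ 2),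
    Pi.single_eq_of_ne (by decide : (1:Fin 3) ≠ 2)]
  push_cast
  ring
end

section
/- Let f₄ = (yz - x²)² - x³y ∈ ℂ[x,y,z]. Then the three triples R₁ = (y(3x - 4z), 3y(4x - 3y), z(9y - 20x)), R₂ = (-x(x + 2z), -4x² + 3xy + 10yz, -z(3x + 10z)), R₃ = (xy, -3y², 2x² + 3yz) are each syzygies of the partial derivatives of f₄, i.e. each satisfies a·∂f₄/∂x + b·∂f₄/∂y + c·∂f₄/∂z = 0. -/
open MvPolynomial

noncomputable def f₄ : MvPolynomial (Fin 3) ℂ := (y * z - x ^ 2) ^ 2 - x ^ 3 * y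

lemma derivation_f₄ (D : Derivation ℂ (MvPolynomial (Fin 3) ℂ) (MvPolynomial (Fin 3) ℂ)) :
    D f₄ = (-4 * x * (y * z - x ^ 2) - 3 * x ^ 2 * y) * D x
      + (2 * z * (y * z - x ^ 2) - x ^ 3) * D y + 2 * y * (y * z - x ^ 2) * D z := by
  simp only [f₄, map_sub, Derivation.leibniz, Derivation.leibniz_pow, smul_eq_mul, nsmul_eq_mul]
  ring

lemma pderiv_zero_f₄ : pderiv 0 f₄ = -4 * x * (y * z - x ^ 2) - 3 * x ^ 2 * y := by
  simp [derivation_f₄, pderiv_X]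

lemma pderiv_one_f₄ : pderiv 1 f₄ = 2 * z * (y * z - x ^ 2) - x ^ 3 := by
  simp [derivation_f₄, pderiv_X]

lemma pderiv_two_f₄ : pderiv 2 f₄ = 2 * y * (y * z - x ^ 2) := by
  simp [derivation_f₄, pderiv_X]

theorem stmt_4 :
    let f : MvPolynomial (Fin 3) ℂ := (y * z - x ^ 2) ^ 2 - x ^ 3 * y
    ((y * (3 * x - 4 * z)) * pderiv 0 f + (3 * y * (4 * x - 3 * y)) * pderiv 1 f
      + (z * (9 * y - 20 * x)) * pderiv 2 f = 0) ∧
    ((-(x * (x + 2 * z))) * pderiv 0 f + (-(4 * x ^ 2) + 3 * x * y + 10 * y * z) * pderiv 1 f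
      + (-(z * (3 * x + 10 * z))) * pderiv 2 f = 0) ∧
    ((x * y) * pderiv 0 f + (-(3 * y ^ 2)) * pderiv 1 f
      + (2 * x ^ 2 + 3 * y * z) * pderiv 2 f = 0) := by
  intro f
  have hf : f = f₄ := rfl
  simp only [hf, pderiv_zero_f₄, pderiv_one_f₄, pderiv_two_f₄]
  exact ⟨by ring, by ring, by ring⟩
end

section
/- For every k ≥ 1, with f_{4k} = (yᵏzᵏ - x^{2k})² - x^{3k}yᵏ ∈ ℂ[x,y,z], the three triples R_{k,1} = (yᵏ(3xᵏ - 4zᵏ), 3x^{k-1}y(4xᵏ - 3yᵏ), x^{k-1}z(9yᵏ - 20xᵏ)), R_{k,2} = (-xy^{k-1}(xᵏ + 2zᵏ), -4x^{2k} + 3xᵏyᵏ + 10yᵏzᵏ, -y^{k-1}z(3xᵏ + 10zᵏ)), R_{k,3} = (xyᵏz^{k-1}, -3y^{k+1}z^{k-1}, 2x^{2k} + 3yᵏzᵏ) are each syzygies of the partial derivatives of f_{4k}. -/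
/-!
Writing `A = yᵏzᵏ - x^{2k}`, the partial derivatives of `f = A² - x^{3k}yᵏ` are
`f_x = -k x^{k-1} (4xᵏA + 3x^{2k}yᵏ)`, `f_y = k y^{k-1} (2zᵏA - x^{3k})` and
`f_z = 2k yᵏz^{k-1} A`. Substituting these, and `k = m + 1` so that every `k - 1` becomes `m`,
each syzygy is a polynomial identity in `x, y, z, xᵐ, yᵐ, zᵐ` over `ℤ`.
-/

open MvPolynomial

section

variable (R : Type*) [CommRing R] (k : ℕ)

noncomputable def f4k : MvPolynomial (Fin 3) R :=
  (X 1 ^ k * X 2 ^ k - X 0 ^ (2 * k)) ^ 2 - X 0 ^ (3 * k) * X 1 ^ k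

theorem pderiv_zero_f4k :
    pderiv 0 (f4k R k) = -(k : MvPolynomial (Fin 3) R) * X 0 ^ (k - 1) *
      (4 * X 0 ^ k * (X 1 ^ k * X 2 ^ k - X 0 ^ (2 * k)) + 3 * X 0 ^ (2 * k) * X 1 ^ k) := by
  cases k with
  | zero => simp [f4k]
  | succ k =>
    simp only [f4k, map_sub, Derivation.leibniz, Derivation.leibniz_pow, pderiv_X_self,
        pderiv_X_of_ne, ne_eq, Fin.reduceEq, not_false_eq_true, smul_eq_mul, nsmul_eq_mul]
    rw [show 2 * (k + 1) - 1 = k + (k + 1) by omega, show 3 * (k + 1) - 1 = k + 2 * (k + 1) by omega]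
    push_cast
    ring

theorem pderiv_one_f4k :
    pderiv 1 (f4k R k) = (k : MvPolynomial (Fin 3) R) * X 1 ^ (k - 1) *
      (2 * X 2 ^ k * (X 1 ^ k * X 2 ^ k - X 0 ^ (2 * k)) - X 0 ^ (3 * k)) := by
  simp only [f4k, map_sub, Derivation.leibniz, Derivation.leibniz_pow, pderiv_X_self,
      pderiv_X_of_ne, ne_eq, Fin.reduceEq, not_false_eq_true, smul_eq_mul, nsmul_eq_mul]
  ring

theorem pderiv_two_f4k :
    pderiv 2 (f4k R k) =
      2 * (k : MvPolynomial (Fin 3) R) * X 1 ^ k * X 2 ^ (k - 1) * (X 1 ^ k * X 2 ^ k - X 0 ^ (2 * k)) := by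
  simp only [f4k, map_sub, Derivation.leibniz, Derivation.leibniz_pow, pderiv_X_self,
      pderiv_X_of_ne, ne_eq, Fin.reduceEq, not_false_eq_true, smul_eq_mul, nsmul_eq_mul]
  ring

variable {R k}

theorem f4k_syzygy_one (hk : 1 ≤ k) :
    (X 1 ^ k * (3 * X 0 ^ k - 4 * X 2 ^ k)) * pderiv 0 (f4k R k)
      + (3 * X 0 ^ (k - 1) * X 1 * (4 * X 0 ^ k - 3 * X 1 ^ k)) * pderiv 1 (f4k R k)
      + (X 0 ^ (k - 1) * X 2 * (9 * X 1 ^ k - 20 * X 0 ^ k)) * pderiv 2 (f4k R k) = 0 := by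
  rw [pderiv_zero_f4k, pderiv_one_f4k, pderiv_two_f4k]
  obtain ⟨m, rfl⟩ := Nat.exists_eq_add_of_le' hk
  simp only [Nat.add_sub_cancel]
  ring

theorem f4k_syzygy_two (hk : 1 ≤ k) :
    (-(X 0 * X 1 ^ (k - 1) * (X 0 ^ k + 2 * X 2 ^ k))) * pderiv 0 (f4k R k)
      + (-(4 * X 0 ^ (2 * k)) + 3 * X 0 ^ k * X 1 ^ k + 10 * X 1 ^ k * X 2 ^ k) * pderiv 1 (f4k R k)
      + (-(X 1 ^ (k - 1) * X 2 * (3 * X 0 ^ k + 10 * X 2 ^ k))) * pderiv 2 (f4k R k) = 0 := by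
  rw [pderiv_zero_f4k, pderiv_one_f4k, pderiv_two_f4k]
  obtain ⟨m, rfl⟩ := Nat.exists_eq_add_of_le' hk
  simp only [Nat.add_sub_cancel]
  ring

theorem f4k_syzygy_three (hk : 1 ≤ k) :
    (X 0 * X 1 ^ k * X 2 ^ (k - 1)) * pderiv 0 (f4k R k)
      + (-(3 * X 1 ^ (k + 1) * X 2 ^ (k - 1))) * pderiv 1 (f4k R k)
      + (2 * X 0 ^ (2 * k) + 3 * X 1 ^ k * X 2 ^ k) * pderiv 2 (f4k R k) = 0 := by
  rw [pderiv_zero_f4k, pderiv_one_f4k, pderiv_two_f4k]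
  obtain ⟨m, rfl⟩ := Nat.exists_eq_add_of_le' hk
  simp only [Nat.add_sub_cancel]
  ring

end

theorem stmt_6 (k : ℕ) (hk : 1 ≤ k) :
    let f : MvPolynomial (Fin 3) ℂ := (y ^ k * z ^ k - x ^ (2 * k)) ^ 2 - x ^ (3 * k) * y ^ k
    ((y ^ k * (3 * x ^ k - 4 * z ^ k)) * pderiv 0 f
      + (3 * x ^ (k - 1) * y * (4 * x ^ k - 3 * y ^ k)) * pderiv 1 f
      + (x ^ (k - 1) * z * (9 * y ^ k - 20 * x ^ k)) * pderiv 2 f = 0) ∧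
    ((-(x * y ^ (k - 1) * (x ^ k + 2 * z ^ k))) * pderiv 0 f
      + (-(4 * x ^ (2 * k)) + 3 * x ^ k * y ^ k + 10 * y ^ k * z ^ k) * pderiv 1 f
      + (-(y ^ (k - 1) * z * (3 * x ^ k + 10 * z ^ k))) * pderiv 2 f = 0) ∧
    ((x * y ^ k * z ^ (k - 1)) * pderiv 0 f
      + (-(3 * y ^ (k + 1) * z ^ (k - 1))) * pderiv 1 f
      + (2 * x ^ (2 * k) + 3 * y ^ k * z ^ k) * pderiv 2 f = 0) :=
  ⟨f4k_syzygy_one hk, f4k_syzygy_two hk, f4k_syzygy_three hk⟩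
end

section
/- For every k ≥ 1, the triples R_{k,1} = (yᵏ(3xᵏ - 4zᵏ), 3x^{k-1}y(4xᵏ - 3yᵏ), x^{k-1}z(9yᵏ - 20xᵏ)), R_{k,2} = (-xy^{k-1}(xᵏ + 2zᵏ), -4x^{2k} + 3xᵏyᵏ + 10yᵏzᵏ, -y^{k-1}z(3xᵏ + 10zᵏ)), R_{k,3} = (xyᵏz^{k-1}, -3y^{k+1}z^{k-1}, 2x^{2k} + 3yᵏzᵏ) in ℂ[x,y,z]³ satisfy x·R_{k,1} + 3y·R_{k,2} + 10z·R_{k,3} = 0 componentwise. -/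
open MvPolynomial

theorem stmt_7 (k : ℕ) (hk : 1 ≤ k) :
    let R1 : Fin 3 → MvPolynomial (Fin 3) ℂ :=
      ![y ^ k * (3 * x ^ k - 4 * z ^ k), 3 * x ^ (k - 1) * y * (4 * x ^ k - 3 * y ^ k),
        x ^ (k - 1) * z * (9 * y ^ k - 20 * x ^ k)]
    let R2 : Fin 3 → MvPolynomial (Fin 3) ℂ :=
      ![-(x * y ^ (k - 1) * (x ^ k + 2 * z ^ k)),
        -(4 * x ^ (2 * k)) + 3 * x ^ k * y ^ k + 10 * y ^ k * z ^ k,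
        -(y ^ (k - 1) * z * (3 * x ^ k + 10 * z ^ k))]
    let R3 : Fin 3 → MvPolynomial (Fin 3) ℂ :=
      ![x * y ^ k * z ^ (k - 1), -(3 * y ^ (k + 1) * z ^ (k - 1)),
        2 * x ^ (2 * k) + 3 * y ^ k * z ^ k]
    ∀ i : Fin 3, x * R1 i + 3 * y * R2 i + 10 * z * R3 i = 0 := by
  -- With `k = m + 1` the truncated `k - 1` becomes `m`, and each component is a ring identity.
  obtain ⟨m, rfl⟩ := Nat.exists_eq_add_of_le' hk
  intro R1 R2 R3 i
  fin_cases i <;> simp only [R1, R2, R3, Nat.add_sub_cancel, Fin.zero_eta, Fin.mk_one,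
    Fin.reduceFinMk, Matrix.cons_val] <;> ring
end

section
/- For every k ≥ 1, with f_{2k} = x^{2k} + y^{2k} + z^{2k} - 2(xᵏyᵏ + xᵏzᵏ + yᵏzᵏ) ∈ ℂ[x,y,z], the three triples R_{k,1} = (yᵏ - zᵏ, x^{k-1}y, -x^{k-1}z), R_{k,2} = (-xy^{k-1}, zᵏ - xᵏ, y^{k-1}z), R_{k,3} = (xz^{k-1}, -yz^{k-1}, xᵏ - yᵏ) are each syzygies of the partial derivatives of f_{2k}, and they satisfy x·R_{k,1} + y·R_{k,2} + z·R_{k,3} = 0. -/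
open MvPolynomial

/-
With a = xᵏ, b = yᵏ, c = zᵏ we have f = a² + b² + c² - 2(ab + ac + bc), so ∂f/∂x = 2k xᵏ⁻¹ (a - b - c)
and cyclically. Since xᵏ = x·xᵏ⁻¹ for k ≥ 1, every claimed identity is then a polynomial identity in
x, y, z, xᵏ⁻¹, yᵏ⁻¹, zᵏ⁻¹.
-/

theorem Derivation.map_sq_add_sq_add_sq_sub_two_mul {R A : Type*} [CommSemiring R] [CommRing A]
    [Algebra R A] (D : Derivation R A A) (a b c : A) :
    D (a ^ 2 + b ^ 2 + c ^ 2 - 2 * (a * b + a * c + b * c)) =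
      2 * (D a * (a - b - c) + D b * (b - a - c) + D c * (c - a - b)) := by
  have hD2 : D (2 : A) = 0 := by exact_mod_cast D.map_natCast 2
  simp only [map_add, map_sub, Derivation.leibniz, Derivation.leibniz_pow, hD2, smul_eq_mul]
  ring

theorem Derivation.map_pow_sq_add_pow_sq_add_pow_sq_sub_two_mul {R A : Type*} [CommSemiring R]
    [CommRing A] [Algebra R A] (D : Derivation R A A) (a b c : A) (m : ℕ) :
    D (a ^ (2 * (m + 1)) + b ^ (2 * (m + 1)) + c ^ (2 * (m + 1))
        - 2 * (a ^ (m + 1) * b ^ (m + 1) + a ^ (m + 1) * c ^ (m + 1) + b ^ (m + 1) * c ^ (m + 1))) =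
      2 * (m + 1) * (a ^ m * D a * (a ^ (m + 1) - b ^ (m + 1) - c ^ (m + 1))
        + b ^ m * D b * (b ^ (m + 1) - a ^ (m + 1) - c ^ (m + 1))
        + c ^ m * D c * (c ^ (m + 1) - a ^ (m + 1) - b ^ (m + 1))) := by
  simp only [mul_comm 2 (m + 1), pow_mul, D.map_sq_add_sq_add_sq_sub_two_mul, D.leibniz_pow,
    Nat.add_sub_cancel, nsmul_eq_mul, smul_eq_mul]
  push_cast
  ring

theorem stmt_9 (k : ℕ) (hk : 1 ≤ k) :
    let f : MvPolynomial (Fin 3) ℂ :=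
      x ^ (2 * k) + y ^ (2 * k) + z ^ (2 * k)
        - 2 * (x ^ k * y ^ k + x ^ k * z ^ k + y ^ k * z ^ k)
    let R1 : Fin 3 → MvPolynomial (Fin 3) ℂ :=
      ![y ^ k - z ^ k, x ^ (k - 1) * y, -(x ^ (k - 1) * z)]
    let R2 : Fin 3 → MvPolynomial (Fin 3) ℂ :=
      ![-(x * y ^ (k - 1)), z ^ k - x ^ k, y ^ (k - 1) * z]
    let R3 : Fin 3 → MvPolynomial (Fin 3) ℂ :=
      ![x * z ^ (k - 1), -(y * z ^ (k - 1)), x ^ k - y ^ k]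
    (R1 0 * pderiv 0 f + R1 1 * pderiv 1 f + R1 2 * pderiv 2 f = 0) ∧
    (R2 0 * pderiv 0 f + R2 1 * pderiv 1 f + R2 2 * pderiv 2 f = 0) ∧
    (R3 0 * pderiv 0 f + R3 1 * pderiv 1 f + R3 2 * pderiv 2 f = 0) ∧
    (∀ i : Fin 3, x * R1 i + y * R2 i + z * R3 i = 0) := by
  obtain ⟨m, rfl⟩ : ∃ m, k = m + 1 := ⟨k - 1, by omega⟩
  intro f R1 R2 R3
  have hgrad : ∀ i : Fin 3, pderiv i f = 2 * (m + 1) *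
      (x ^ m * pderiv i x * (x ^ (m + 1) - y ^ (m + 1) - z ^ (m + 1))
        + y ^ m * pderiv i y * (y ^ (m + 1) - x ^ (m + 1) - z ^ (m + 1))
        + z ^ m * pderiv i z * (z ^ (m + 1) - x ^ (m + 1) - y ^ (m + 1))) := fun i =>
    (pderiv i).map_pow_sq_add_pow_sq_add_pow_sq_sub_two_mul x y z m
  refine ⟨?_, ?_, ?_, fun i => ?_⟩
  · simp [R1, hgrad]
    ring
  · simp [R2, hgrad]
    ring
  · simp [R3, hgrad]
    ring
  · fin_cases i <;> simp [R1, R2, R3] <;> ring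
end
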